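/- The fused transfer matrices have central zeroes: for every m ∈ {1, …, n}, every a ∈ {1, …, N}, and every integer r with 1 ≤ r ≤ m−1, one has T_m^{(K)}(ξ_a + rη) = 0 as an operator on H. -/

import Mathlib

open Matrix BigOperators

noncomputable section

namespace GLnSoV

/-- The permutation operator on `ℂ^n ⊗ ℂ^n`. -/
def permOp (n : ℕ) : Matrix (Fin n × Fin n) (Fin n × Fin n) ℂ :=
  Matrix.of fun p q => if p.1 = q.2 ∧ p.2 = q.1 then (1 : ℂ) else 0

/-- The rational `gl_n` R-matrix `R(λ) = λ·Id + η·P`. -/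
def Rmat (n : ℕ) (η lam : ℂ) : Matrix (Fin n × Fin n) (Fin n × Fin n) ℂ :=
  lam • (1 : Matrix (Fin n × Fin n) (Fin n × Fin n) ℂ) + η • permOp n

/-- `R(λ)` acting on the `a`-th and `b`-th factors of a tensor product of copies of `ℂ^n`. -/
def Rab (n : ℕ) (η : ℂ) {ι : Type} [Fintype ι] [DecidableEq ι] (a b : ι) (lam : ℂ) :
    Matrix (ι → Fin n) (ι → Fin n) ℂ :=
  Matrix.of fun x y =>
    Rmat n η lam (x a, x b) (y a, y b) *
      ∏ c ∈ Finset.univ.filter (fun c => c ≠ a ∧ c ≠ b), (if x c = y c then (1 : ℂ) else 0)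

/-- `R(λ)` acting on the auxiliary space and the `j`-th site of the quantum space. -/
def Raux (n N : ℕ) (η : ℂ) (lam : ℂ) (j : Fin N) :
    Matrix (Fin n × (Fin N → Fin n)) (Fin n × (Fin N → Fin n)) ℂ :=
  Matrix.of fun p q =>
    Rmat n η lam (p.1, p.2 j) (q.1, q.2 j) *
      ∏ c ∈ Finset.univ.filter (fun c => c ≠ j), (if p.2 c = q.2 c then (1 : ℂ) else 0)

/-- The twist matrix `K` acting on the auxiliary space. -/
def Kaux (n N : ℕ) (K : Matrix (Fin n) (Fin n) ℂ) :
    Matrix (Fin n × (Fin N → Fin n)) (Fin n × (Fin N → Fin n)) ℂ :=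
  Matrix.of fun p q => K p.1 q.1 * (if p.2 = q.2 then (1 : ℂ) else 0)

/-- The twisted monodromy matrix `M^{(K)}(λ) = K_a R_{a,N}(λ-ξ_N) ⋯ R_{a,1}(λ-ξ_1)`. -/
def monodromy (n N : ℕ) (η : ℂ) (ξ : Fin N → ℂ) (K : Matrix (Fin n) (Fin n) ℂ) (lam : ℂ) :
    Matrix (Fin n × (Fin N → Fin n)) (Fin n × (Fin N → Fin n)) ℂ :=
  Kaux n N K * (List.ofFn (fun j : Fin N => Raux n N η (lam - ξ j.rev) j.rev)).prod

/-- The operator permuting the tensor factors of `(ℂ^n)^{⊗m}` according to `π`. -/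
def permTensorOp (n m : ℕ) (π : Equiv.Perm (Fin m)) :
    Matrix (Fin m → Fin n) (Fin m → Fin n) ℂ :=
  Matrix.of fun v w => if v = w ∘ π then (1 : ℂ) else 0

/-- The antisymmetrizer `P⁻_{1…m}` on `(ℂ^n)^{⊗m}`. -/
def antisym (n m : ℕ) : Matrix (Fin m → Fin n) (Fin m → Fin n) ℂ :=
  (m.factorial : ℂ)⁻¹ •
    ∑ π : Equiv.Perm (Fin m), ((Equiv.Perm.sign π : ℤ) : ℂ) • permTensorOp n m π

/-- The monodromy matrix with the `j`-th copy of `(ℂ^n)^{⊗m}` as auxiliary space. -/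
def MauxJ (n N : ℕ) (η : ℂ) (ξ : Fin N → ℂ) (K : Matrix (Fin n) (Fin n) ℂ) (m : ℕ)
    (j : Fin m) (lam : ℂ) :
    Matrix ((Fin m → Fin n) × (Fin N → Fin n)) ((Fin m → Fin n) × (Fin N → Fin n)) ℂ :=
  Matrix.of fun p q =>
    monodromy n N η ξ K lam (p.1 j, p.2) (q.1 j, q.2) *
      ∏ c ∈ Finset.univ.filter (fun c => c ≠ j), (if p.1 c = q.1 c then (1 : ℂ) else 0)

/-- The antisymmetrizer tensored with the identity of the quantum space. -/
def antisymH (n N m : ℕ) :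
    Matrix ((Fin m → Fin n) × (Fin N → Fin n)) ((Fin m → Fin n) × (Fin N → Fin n)) ℂ :=
  Matrix.of fun p q => antisym n m p.1 q.1 * (if p.2 = q.2 then (1 : ℂ) else 0)

/-- The fused transfer matrix `T_m^{(K)}(λ)`, the trace over the `m` auxiliary copies of `ℂ^n`
of `P⁻_{1…m} M₁(λ) M₂(λ-η) ⋯ M_m(λ-(m-1)η)`. -/
def transfer (n N : ℕ) (η : ℂ) (ξ : Fin N → ℂ) (K : Matrix (Fin n) (Fin n) ℂ)
    (m : ℕ) (lam : ℂ) : Matrix (Fin N → Fin n) (Fin N → Fin n) ℂ :=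
  Matrix.of fun x y =>
    ∑ v : Fin m → Fin n,
      (antisymH n N m *
        (List.ofFn (fun j : Fin m => MauxJ n N η ξ K m j (lam - (j : ℕ) * η))).prod)
        (v, x) (v, y)

/-- `K ⊗ ⋯ ⊗ K` on `(ℂ^n)^{⊗m}`. -/
def Ktensor (n : ℕ) (K : Matrix (Fin n) (Fin n) ℂ) (m : ℕ) :
    Matrix (Fin m → Fin n) (Fin m → Fin n) ℂ :=
  Matrix.of fun v w => ∏ j, K (v j) (w j)

/-- The asymptotic coefficient `tr(P⁻_{1…m} K₁ ⋯ K_m)`. -/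
def asymCoef (n : ℕ) (K : Matrix (Fin n) (Fin n) ℂ) (m : ℕ) : ℂ :=
  (antisym n m * Ktensor n K m).trace

/-- The scalar quantum determinant. -/
def qdet (n N : ℕ) (η : ℂ) (ξ : Fin N → ℂ) (K : Matrix (Fin n) (Fin n) ℂ) (lam : ℂ) : ℂ :=
  K.det * ∏ b, ((lam - ξ b + η) * ∏ m ∈ Finset.Icc 1 (n - 1), (lam - ξ b - (m : ℂ) * η))

/-- The candidate eigenvalue function `t₁^{(K,x)}(λ)`. -/
def t1fun (n N : ℕ) (ξ : Fin N → ℂ) (K : Matrix (Fin n) (Fin n) ℂ) (x : Fin N → ℂ)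
    (lam : ℂ) : ℂ :=
  K.trace * ∏ a, (lam - ξ a) +
    ∑ a, x a * ∏ b ∈ Finset.univ.erase a, (lam - ξ b) / (ξ a - ξ b)

/-- The interpolation coefficients `g_a^{(m+1)}(λ)` (second argument is `m`). -/
def gfun (N : ℕ) (η : ℂ) (ξ : Fin N → ℂ) (m : ℕ) (a : Fin N) (lam : ℂ) : ℂ :=
  (∏ b ∈ Finset.univ.erase a, (lam - ξ b) / (ξ a - ξ b)) *
    ∏ b, ∏ r ∈ Finset.Icc 1 m, (ξ a - ξ b - (r : ℂ) * η)⁻¹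

/-- The candidate eigenvalue functions `t_m^{(K,x)}(λ)`, defined recursively. -/
def tfun (n N : ℕ) (η : ℂ) (ξ : Fin N → ℂ) (K : Matrix (Fin n) (Fin n) ℂ)
    (x : Fin N → ℂ) : ℕ → ℂ → ℂ
  | 0, _ => 1
  | 1, lam => t1fun n N ξ K x lam
  | m + 2, lam =>
      (∏ b, ∏ r ∈ Finset.Icc 1 (m + 1), (lam - ξ b - (r : ℂ) * η)) *
        (asymCoef n K (m + 2) * ∏ b, (lam - ξ b) +
          ∑ a, gfun N η ξ (m + 1) a lam * x a * tfun n N η ξ K x (m + 1) (ξ a - η))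

/-- The SoV operator `∏_{a} (T₁^{(K)}(ξ_a))^{h_a}`. -/
def sovOp (n N : ℕ) (η : ℂ) (ξ : Fin N → ℂ) (K : Matrix (Fin n) (Fin n) ℂ)
    (h : Fin N → Fin n) : Matrix (Fin N → Fin n) (Fin N → Fin n) ℂ :=
  (List.ofFn (fun a : Fin N => transfer n N η ξ K 1 (ξ a) ^ (h a : ℕ))).prod

/-- The SoV covector `⟨h| = ⟨S| ∏_a (T₁^{(K)}(ξ_a))^{h_a}`. -/
def sovCovector (n N : ℕ) (η : ℂ) (ξ : Fin N → ℂ) (K : Matrix (Fin n) (Fin n) ℂ)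
    (S : (Fin N → Fin n) → ℂ) (h : Fin N → Fin n) : (Fin N → Fin n) → ℂ :=
  S ᵥ* sovOp n N η ξ K h

/-- The SoV basis hypothesis: the covectors `⟨h|` form a basis of the dual space. -/
def sovBasisHyp (n N : ℕ) (η : ℂ) (ξ : Fin N → ℂ) (K : Matrix (Fin n) (Fin n) ℂ)
    (S : (Fin N → Fin n) → ℂ) : Prop :=
  ∃ B : Module.Basis (Fin N → Fin n) ℂ ((Fin N → Fin n) → ℂ),
    ∀ h, B h = sovCovector n N η ξ K S h

/-- The coefficient `α₁(λ) = ᾱ ∏_a (λ + η - ξ_a)`. -/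
def alpha1 (N : ℕ) (η : ℂ) (ξ : Fin N → ℂ) (abar lam : ℂ) : ℂ :=
  abar * ∏ a, (lam + η - ξ a)

/-- The coefficients `α_b(λ)` of the quantum spectral curve. -/
def alphaF (N : ℕ) (η : ℂ) (ξ : Fin N → ℂ) (abar : ℂ) : ℕ → ℂ → ℂ
  | 0, _ => -1
  | j + 1, lam =>
      (-1 : ℂ) ^ j * ∏ h ∈ Finset.range (j + 1), alpha1 N η ξ abar (lam - (h : ℂ) * η)

/-!
At `λ = ξ_a + rη` the auxiliary copies `r` and `r + 1` carry the arguments `ξ_a + η` and `ξ_a`,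
so at the site `a` they contribute `R_{r,a}(η) R_{r+1,a}(0) = η² P_{r+1,a} (1 + P_{r,r+1})`.
The Yang–Baxter relation
`(1 + P_{12}) R_{1b}(ν) R_{2b}(ν - η) = R_{2b}(ν - η) R_{1b}(ν) (1 + P_{12})`
moves `1 + P_{r,r+1}` past the remaining sites, and it commutes with the monodromies of the other
auxiliary copies, so the ordered product of monodromies is `V (1 + P_{r,r+1})`. The trace over the
auxiliary spaces is cyclic for operators acting on them alone; this brings `1 + P_{r,r+1}` next to
the antisymmetrizer, which it annihilates.
-/

open scoped Kronecker

theorem exists_le_of_mem_drop_ofFn {α : Type*} {k : ℕ} {f : Fin k → α} {t : ℕ} {x : α}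
    (hx : x ∈ (List.ofFn f).drop t) : ∃ j : Fin k, t ≤ j ∧ f j = x := by
  obtain ⟨i, hi, rfl⟩ := List.mem_iff_getElem.1 hx
  simp only [List.length_drop, List.length_ofFn] at hi
  exact ⟨⟨t + i, by omega⟩, by simp, by simp⟩

theorem comp_swap_eq_iff {σ β : Type*} [DecidableEq σ] {u v : σ → β} {x y : σ} :
    u ∘ Equiv.swap x y = v ↔ (u x = v y ∧ u y = v x) ∧ ∀ s, s ≠ x → s ≠ y → u s = v s := by
  constructor
  · rintro rfl
    exact ⟨⟨by simp, by simp⟩, fun s hx hy => by simp [Equiv.swap_apply_of_ne_of_ne hx hy]⟩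
  · rintro ⟨⟨hx, hy⟩, hs⟩
    funext s
    by_cases hsx : s = x
    · subst hsx; simp [hy]
    by_cases hsy : s = y
    · subst hsy; simp [hx]
    simp [Equiv.swap_apply_of_ne_of_ne hsx hsy, hs s hsx hsy]

theorem eq_iff_apply_eq_and_apply_eq {σ β : Type*} {u v : σ → β} (x y : σ) :
    u = v ↔ (u x = v x ∧ u y = v y) ∧ ∀ s, s ≠ x → s ≠ y → u s = v s := by
  refine ⟨by rintro rfl; simp, fun ⟨⟨hx, hy⟩, hs⟩ => funext fun s => ?_⟩
  by_cases hsx : s = x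
  · exact hsx ▸ hx
  by_cases hsy : s = y
  · exact hsy ▸ hy
  exact hs s hsx hsy

section MonoidLists

variable {M : Type*} [Monoid M]

theorem prod_ofFn_mul_prod_ofFn {k : ℕ} (a b : Fin k → M)
    (h : ∀ i j : Fin k, j < i → Commute (a i) (b j)) :
    (List.ofFn a).prod * (List.ofFn b).prod = (List.ofFn fun i => a i * b i).prod := by
  induction k with
  | zero => simp
  | succ k ih =>
    simp only [List.ofFn_succ, List.prod_cons]
    rw [← ih (fun i => a i.succ) (fun i => b i.succ)
      fun i j hij => h _ _ (Fin.succ_lt_succ_iff.2 hij)]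
    have hb : Commute (List.ofFn fun i : Fin k => a i.succ).prod (b 0) :=
      Commute.list_prod_left _ _ fun x hx => by
        obtain ⟨i, rfl⟩ := List.mem_ofFn.1 hx
        exact h _ _ (Fin.succ_pos i)
    rw [mul_assoc, ← mul_assoc _ (b 0), hb.eq]
    simp only [mul_assoc]

theorem prod_ofFn_eq_take_mul_mul_drop {k : ℕ} (f : Fin k → M) (i : Fin k) :
    (List.ofFn f).prod = ((List.ofFn f).take i).prod * f i * ((List.ofFn f).drop (i + 1)).prod := by
  rw [← List.prod_take_mul_prod_drop (List.ofFn f) i,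
    List.drop_eq_getElem_cons (by simp), List.prod_cons, List.getElem_ofFn, mul_assoc]

theorem prod_ofFn_eq_take_mul_mul_mul_drop {k : ℕ} (f : Fin k → M) (i : ℕ) (hi : i + 1 < k) :
    (List.ofFn f).prod = ((List.ofFn f).take i).prod *
      (f ⟨i, by omega⟩ * f ⟨i + 1, hi⟩) * ((List.ofFn f).drop (i + 2)).prod := by
  rw [prod_ofFn_eq_take_mul_mul_drop f ⟨i, by omega⟩,
    List.drop_eq_getElem_cons (by simpa using hi), List.prod_cons, List.getElem_ofFn]
  simp only [mul_assoc]

theorem exists_semiconjBy_list_prod (a : M) (L : List M) (h : ∀ x ∈ L, ∃ y, SemiconjBy a x y) :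
    ∃ y, SemiconjBy a L.prod y := by
  induction L with
  | nil => exact ⟨1, SemiconjBy.one_right a⟩
  | cons x L ih =>
    obtain ⟨y, hy⟩ := h x List.mem_cons_self
    obtain ⟨z, hz⟩ := ih fun w hw => h w (List.mem_cons_of_mem x hw)
    exact ⟨y * z, by simpa using hy.mul_right hz⟩

end MonoidLists

section SlotOperators

open Equiv

variable {ι κ α R : Type*}

-- A basis state of the tensor product over the slots `ι ⊕ κ` is a pair of tuples, read through
-- `Sum.elim` as one tuple on `ι ⊕ κ`; `slotEquiv e` relabels the slots by `e`.
def slotEquiv (e : Perm (ι ⊕ κ)) : Perm ((ι → α) × (κ → α)) :=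
  (sumArrowEquivProdArrow ι κ α).permCongr (e.symm.arrowCongr (Equiv.refl α))

theorem elim_slotEquiv (e : Perm (ι ⊕ κ)) (p : (ι → α) × (κ → α)) :
    Sum.elim (slotEquiv e p).1 (slotEquiv e p).2 = Sum.elim p.1 p.2 ∘ e := by
  ext (c | b) <;> rfl

theorem elim_eq_elim_iff {p q : (ι → α) × (κ → α)} :
    Sum.elim p.1 p.2 = Sum.elim q.1 q.2 ↔ p = q :=
  (sumArrowEquivProdArrow ι κ α).symm.injective.eq_iff

theorem slotEquiv_mul (e f : Perm (ι ⊕ κ)) :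
    slotEquiv (α := α) (e * f) = slotEquiv f * slotEquiv e := by
  ext p : 1
  apply (sumArrowEquivProdArrow ι κ α).symm.injective
  change Sum.elim _ _ = Sum.elim _ _
  rw [Perm.mul_apply, elim_slotEquiv, elim_slotEquiv, elim_slotEquiv]
  rfl

theorem slotEquiv_sumCongr (π : Perm ι) (p : (ι → α) × (κ → α)) :
    slotEquiv (Perm.sumCongr π (Equiv.refl κ)) p = (p.1 ∘ π, p.2) :=
  rfl

variable [Fintype ι] [DecidableEq ι] [Fintype κ] [DecidableEq κ] [Fintype α] [DecidableEq α]
  [CommRing R]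

variable (α R) in
def slotPermMatrix : Perm (ι ⊕ κ) →* Matrix ((ι → α) × (κ → α)) ((ι → α) × (κ → α)) R where
  toFun e := (slotEquiv e).permMatrix R
  map_one' := by
    rw [← Matrix.permMatrix_one]; congr 1
  map_mul' e f := by rw [slotEquiv_mul, Matrix.permMatrix_mul]

theorem slotPermMatrix_apply (e : Perm (ι ⊕ κ)) (p q : (ι → α) × (κ → α)) :
    slotPermMatrix α R e p q = if slotEquiv e p = q then 1 else 0 := by
  simp [slotPermMatrix, PEquiv.toMatrix_apply]

-- `R_{xy}(ν) = ν + η P_{xy}` on the tensor slots `x` and `y`.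
def slotR (η : R) (x y : ι ⊕ κ) (ν : R) : Matrix ((ι → α) × (κ → α)) ((ι → α) × (κ → α)) R :=
  ν • 1 + η • slotPermMatrix α R (swap x y)

theorem commute_slotPermMatrix_of_submatrix_eq (e : Perm (ι ⊕ κ))
    {A : Matrix ((ι → α) × (κ → α)) ((ι → α) × (κ → α)) R}
    (h : A.submatrix (slotEquiv e) (slotEquiv e) = A) : Commute (slotPermMatrix α R e) A := by
  change (slotEquiv e).permMatrix R * A = A * (slotEquiv e).permMatrix R
  rw [PEquiv.toMatrix_toPEquiv_mul, PEquiv.mul_toMatrix_toPEquiv]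
  conv_rhs => rw [← h]
  ext p q
  simp

theorem commute_slotR_of_commute {A : Matrix ((ι → α) × (κ → α)) ((ι → α) × (κ → α)) R}
    {x y : ι ⊕ κ} (h : Commute A (slotPermMatrix α R (swap x y))) (η ν : R) :
    Commute A (slotR η x y ν) :=
  ((Commute.one_right A).smul_right ν).add_right (h.smul_right η)

theorem commute_slotR_slotR {x y z w : ι ⊕ κ} (h : [x, y, z, w].Nodup) (η ν ν' : R) :
    Commute (slotR (α := α) η x y ν) (slotR η z w ν') := by
  have hP := ((Perm.disjoint_swap_swap h).commute).map (slotPermMatrix α R)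
  unfold Commute SemiconjBy slotR
  simp only [mul_add, add_mul, smul_mul_assoc, mul_smul_comm, one_mul, mul_one, hP.eq]
  module

theorem semiconjBy_slotR_mul_slotR {x y z : ι ⊕ κ} (hxy : x ≠ y) (hxz : x ≠ z) (hyz : y ≠ z)
    (η ν : R) :
    SemiconjBy (1 + slotPermMatrix α R (swap x y)) (slotR η x z ν * slotR η y z (ν - η))
      (slotR η y z (ν - η) * slotR η x z ν) := by
  obtain ⟨hSA, hSB, hAS, hBS, hSAB⟩ : swap x y * swap x z = swap x z * swap y z ∧
      swap x y * swap y z = swap y z * swap x z ∧ swap x z * swap x y = swap y z * swap x z ∧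
      swap y z * swap x y = swap x z * swap y z ∧ swap x y * (swap x z * swap y z) = swap x z := by
    refine ⟨?_, ?_, ?_, ?_, ?_⟩ <;> ext u <;> simp only [Perm.mul_apply, swap_apply_def] <;>
      split_ifs <;> simp_all
  unfold SemiconjBy slotR
  simp only [mul_add, add_mul, mul_one, one_mul, smul_mul_assoc, mul_smul_comm, smul_add,
    smul_smul, mul_assoc, ← map_mul]
  simp only [hSA, hSB, hAS, hBS, hSAB, swap_mul_self_mul]
  module

theorem slotR_mul_slotR_zero {x y z : ι ⊕ κ} (hxy : x ≠ y) (hxz : x ≠ z) (hyz : y ≠ z)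
    (η : R) :
    slotR (α := α) η x z η * slotR η y z 0 =
      (η * η) • (slotPermMatrix α R (swap y z) * (1 + slotPermMatrix α R (swap x y))) := by
  have hBS : swap y z * swap x y = swap x z * swap y z := by
    ext u; simp only [Perm.mul_apply, swap_apply_def]; split_ifs <;> simp_all
  unfold slotR
  simp only [mul_add, add_mul, mul_one, one_mul, smul_mul_assoc, mul_smul_comm, smul_add,
    smul_smul, ← map_mul, hBS, zero_smul, zero_add]

end SlotOperators

section AuxiliarySlots

open Equiv

variable {ι κ α R : Type*} [Fintype ι] [DecidableEq ι] [DecidableEq α] [CommSemiring R]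

def embedAux (j : ι) (A : Matrix (α × (κ → α)) (α × (κ → α)) R) :
    Matrix ((ι → α) × (κ → α)) ((ι → α) × (κ → α)) R :=
  Matrix.of fun p q =>
    A (p.1 j, p.2) (q.1 j, q.2) *
      ∏ c ∈ Finset.univ.filter (fun c => c ≠ j), (if p.1 c = q.1 c then (1 : R) else 0)

theorem embedAux_apply (j : ι) (A : Matrix (α × (κ → α)) (α × (κ → α)) R)
    (p q : (ι → α) × (κ → α)) :
    embedAux j A p q =
      A (p.1 j, p.2) (q.1 j, q.2) * if ∀ c, c ≠ j → p.1 c = q.1 c then 1 else 0 := by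
  simp [embedAux, Finset.prod_boole]

def auxSplit (j : ι) : (ι → α) × (κ → α) ≃ (α × (κ → α)) × ({c // c ≠ j} → α) :=
  (((Equiv.piSplitAt j fun _ => α).prodCongr (Equiv.refl _)).trans (Equiv.prodAssoc _ _ _)).trans
    (((Equiv.refl α).prodCongr (Equiv.prodComm _ _)).trans (Equiv.prodAssoc _ _ _).symm)

theorem embedAux_eq_submatrix_kronecker (j : ι) (A : Matrix (α × (κ → α)) (α × (κ → α)) R) :
    embedAux j A = (A ⊗ₖ (1 : Matrix ({c // c ≠ j} → α) ({c // c ≠ j} → α) R)).submatrix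
      (auxSplit j) (auxSplit j) := by
  ext p q
  simp only [embedAux_apply, Matrix.submatrix_apply, Matrix.kroneckerMap_apply, Matrix.one_apply]
  congr 2
  simp [auxSplit, funext_iff]

theorem submatrix_embedAux_sumCongr (j : ι) (A : Matrix (α × (κ → α)) (α × (κ → α)) R)
    {π : Perm ι} (hπ : π j = j) :
    (embedAux j A).submatrix (slotEquiv (Perm.sumCongr π (Equiv.refl κ)))
      (slotEquiv (Perm.sumCongr π (Equiv.refl κ))) = embedAux j A := by
  ext p q
  simp only [Matrix.submatrix_apply, embedAux_apply, slotEquiv_sumCongr, Function.comp_apply, hπ]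
  congr 2
  exact propext (π.forall_congr fun {c} => by rw [π.injective.ne_iff' hπ])

variable [Fintype κ]

theorem embedAux_one (j : ι) :
    embedAux j (1 : Matrix (α × (κ → α)) (α × (κ → α)) R) = 1 := by
  simp only [embedAux_eq_submatrix_kronecker, Matrix.one_kronecker_one,
    Matrix.submatrix_one_equiv]

variable [DecidableEq κ]

theorem embedAux_kronecker_one_apply (j : ι) (K : Matrix α α R) (p q : (ι → α) × (κ → α)) :
    embedAux j (K ⊗ₖ (1 : Matrix (κ → α) (κ → α) R)) p q =
      K (p.1 j) (q.1 j) *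
        if ∀ s, s ≠ Sum.inl j → Sum.elim p.1 p.2 s = Sum.elim q.1 q.2 s then 1 else 0 := by
  have hoff : (p.2 = q.2 ∧ ∀ c, c ≠ j → p.1 c = q.1 c) ↔
      ∀ s, s ≠ Sum.inl j → Sum.elim p.1 p.2 s = Sum.elim q.1 q.2 s := by
    simp [Sum.forall, funext_iff, and_comm]
  rw [embedAux_apply, Matrix.kroneckerMap_apply, Matrix.one_apply, mul_assoc,
    ite_zero_mul_ite_zero, mul_one, if_congr hoff rfl rfl]

theorem submatrix_embedAux_kronecker_one (j : ι) (K : Matrix α α R) {e : Perm (ι ⊕ κ)}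
    (he : e (Sum.inl j) = Sum.inl j) :
    (embedAux j (K ⊗ₖ (1 : Matrix (κ → α) (κ → α) R))).submatrix (slotEquiv e) (slotEquiv e) =
      embedAux j (K ⊗ₖ 1) := by
  ext p q
  have hfst : ∀ r : (ι → α) × (κ → α), (slotEquiv e r).1 j = r.1 j := fun r => by
    simpa [he] using congrFun (elim_slotEquiv e r) (Sum.inl j)
  rw [Matrix.submatrix_apply, embedAux_kronecker_one_apply, embedAux_kronecker_one_apply,
    elim_slotEquiv, elim_slotEquiv, hfst, hfst]
  congr 2
  exact propext (e.forall_congr fun {s} => by rw [e.injective.ne_iff' he]; rfl)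

variable [Fintype α]

theorem embedAux_mul (j : ι) (A B : Matrix (α × (κ → α)) (α × (κ → α)) R) :
    embedAux j (A * B) = embedAux j A * embedAux j B := by
  simp only [embedAux_eq_submatrix_kronecker, Matrix.submatrix_mul_equiv,
    ← Matrix.mul_kronecker_mul, mul_one]

theorem embedAux_list_prod (j : ι) (L : List (Matrix (α × (κ → α)) (α × (κ → α)) R)) :
    embedAux j L.prod = (L.map (embedAux j)).prod := by
  induction L with
  | nil => exact embedAux_one j
  | cons A L ih => rw [List.prod_cons, embedAux_mul, ih, List.map_cons, List.prod_cons]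

end AuxiliarySlots

section PartialTrace

variable {V W R : Type*} [Fintype V] [CommSemiring R]

def auxTrace (A : Matrix (V × W) (V × W) R) : Matrix W W R :=
  Matrix.of fun x y => ∑ v, A (v, x) (v, y)

theorem auxTrace_mul_kronecker_one_comm [Fintype W] [DecidableEq W]
    (A : Matrix (V × W) (V × W) R) (B : Matrix V V R) :
    auxTrace (A * (B ⊗ₖ (1 : Matrix W W R))) = auxTrace ((B ⊗ₖ (1 : Matrix W W R)) * A) := by
  ext x y
  simp [auxTrace, Matrix.mul_apply, Fintype.sum_prod_type, Matrix.one_apply]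
  rw [Finset.sum_comm]
  simp only [mul_comm]

end PartialTrace

section TransferMatrix

open Equiv

variable {n N m : ℕ}

theorem embedAux_Raux (η ν : ℂ) (j : Fin m) (b : Fin N) :
    embedAux j (Raux n N η ν b) = slotR η (Sum.inl j) (Sum.inr b) ν := by
  ext p q
  have hoff : ((∀ c, c ≠ b → p.2 c = q.2 c) ∧ ∀ c, c ≠ j → p.1 c = q.1 c) ↔
      ∀ s, s ≠ Sum.inl j → s ≠ Sum.inr b → Sum.elim p.1 p.2 s = Sum.elim q.1 q.2 s := by
    simp [Sum.forall, and_comm]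
  have hid : p = q ↔ (p.1 j = q.1 j ∧ p.2 b = q.2 b) ∧
      ∀ s, s ≠ Sum.inl j → s ≠ Sum.inr b → Sum.elim p.1 p.2 s = Sum.elim q.1 q.2 s := by
    rw [← elim_eq_elim_iff, eq_iff_apply_eq_and_apply_eq (Sum.inl j) (Sum.inr b)]
    rfl
  have hswap : slotEquiv (swap (Sum.inl j) (Sum.inr b)) p = q ↔ (p.1 j = q.2 b ∧ p.2 b = q.1 j) ∧
      ∀ s, s ≠ Sum.inl j → s ≠ Sum.inr b → Sum.elim p.1 p.2 s = Sum.elim q.1 q.2 s := by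
    rw [← elim_eq_elim_iff, elim_slotEquiv, comp_swap_eq_iff]
    rfl
  simp only [embedAux_apply, Raux, Rmat, permOp, slotR, Matrix.of_apply, Matrix.add_apply,
    Matrix.smul_apply, Matrix.one_apply, smul_eq_mul, slotPermMatrix_apply, Finset.prod_boole,
    Finset.mem_filter, Finset.mem_univ, true_and, Prod.mk.injEq]
  rw [mul_assoc, ite_zero_mul_ite_zero, mul_one]
  simp only [hoff, hid, hswap]
  rw [add_mul, mul_assoc, mul_assoc, ite_zero_mul_ite_zero, ite_zero_mul_ite_zero, mul_one]

theorem permTensorOp_mul (π τ : Perm (Fin m)) :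
    permTensorOp n m π * permTensorOp n m τ = permTensorOp n m (τ * π) := by
  ext v u
  simp [permTensorOp, Matrix.mul_apply, mul_ite, Function.comp_assoc]
  rfl

theorem permTensorOp_mul_antisym (π : Perm (Fin m)) :
    permTensorOp n m π * antisym n m = ((Perm.sign π : ℤ) : ℂ) • antisym n m := by
  have hsign : ((Perm.sign π : ℤ) : ℂ) * (Perm.sign π : ℤ) = 1 := by
    rw [← Int.cast_mul, ← Units.val_mul, Int.units_mul_self, Units.val_one, Int.cast_one]
  have hsum : ∑ τ : Perm (Fin m), ((Perm.sign τ : ℤ) : ℂ) • permTensorOp n m (τ * π) =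
      ((Perm.sign π : ℤ) : ℂ) •
        ∑ τ : Perm (Fin m), ((Perm.sign τ : ℤ) : ℂ) • permTensorOp n m τ := by
    rw [Finset.smul_sum]
    refine Fintype.sum_equiv (Equiv.mulRight π) _ _ fun τ => ?_
    rw [Equiv.coe_mulRight, smul_smul, Perm.sign_mul, Units.val_mul, Int.cast_mul]
    congr 1
    linear_combination -((Perm.sign τ : ℤ) : ℂ) * hsign
  rw [antisym, Matrix.mul_smul, Finset.mul_sum]
  simp only [Matrix.mul_smul, permTensorOp_mul, hsum, smul_comm ((m.factorial : ℂ)⁻¹)]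

theorem one_add_permTensorOp_swap_mul_antisym {i j : Fin m} (h : i ≠ j) :
    (1 + permTensorOp n m (swap i j)) * antisym n m = 0 := by
  rw [add_mul, one_mul, permTensorOp_mul_antisym, Perm.sign_swap h]
  simp

theorem antisymH_eq_kronecker :
    antisymH n N m = antisym n m ⊗ₖ (1 : Matrix (Fin N → Fin n) (Fin N → Fin n) ℂ) := by
  ext p q
  simp [antisymH, Matrix.one_apply]

theorem slotPermMatrix_sumCongr (π : Perm (Fin m)) :
    slotPermMatrix (Fin n) ℂ (Perm.sumCongr π (Equiv.refl (Fin N))) =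
      permTensorOp n m π⁻¹ ⊗ₖ (1 : Matrix (Fin N → Fin n) (Fin N → Fin n) ℂ) := by
  ext p q
  simp only [slotPermMatrix_apply, slotEquiv_sumCongr, Matrix.kroneckerMap_apply, permTensorOp,
    Matrix.of_apply, Matrix.one_apply, ite_zero_mul_ite_zero, mul_one, Perm.inv_def,
    Equiv.eq_comp_symm, Prod.ext_iff]

theorem one_add_slotPermMatrix_swap_inl_eq_kronecker (i j : Fin m) :
    1 + slotPermMatrix (Fin n) ℂ (swap (Sum.inl i) (Sum.inl j) : Perm (Fin m ⊕ Fin N)) =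
      (1 + permTensorOp n m (swap i j)) ⊗ₖ (1 : Matrix (Fin N → Fin n) (Fin N → Fin n) ℂ) := by
  rw [← Perm.sumCongr_swap_refl, slotPermMatrix_sumCongr, swap_inv, Matrix.add_kronecker,
    Matrix.one_kronecker_one]

theorem transfer_eq_auxTrace (η : ℂ) (ξ : Fin N → ℂ) (K : Matrix (Fin n) (Fin n) ℂ) (lam : ℂ) :
    transfer n N η ξ K m lam = auxTrace (antisymH n N m *
      (List.ofFn fun j : Fin m => MauxJ n N η ξ K m j (lam - (j : ℕ) * η)).prod) :=
  rfl

end TransferMatrix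

section Monodromy

open Equiv

variable {n N m : ℕ} (η : ℂ) (ξ : Fin N → ℂ) (K : Matrix (Fin n) (Fin n) ℂ)

theorem Kaux_eq_kronecker : Kaux n N K = K ⊗ₖ (1 : Matrix (Fin N → Fin n) (Fin N → Fin n) ℂ) := by
  ext p q
  simp [Kaux, Matrix.one_apply]

theorem commute_embedAux_Kaux_slotR {j j' : Fin m} (hj : j ≠ j') (b : Fin N) (ν : ℂ) :
    Commute (embedAux j (Kaux n N K)) (slotR η (Sum.inl j') (Sum.inr b) ν) := by
  refine commute_slotR_of_commute (commute_slotPermMatrix_of_submatrix_eq _ ?_).symm η ν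
  rw [Kaux_eq_kronecker]
  exact submatrix_embedAux_kronecker_one j K (swap_apply_of_ne_of_ne (by simpa using hj) (by simp))

theorem commute_symmetrizer_MauxJ {i₀ i₁ j : Fin m} (h₀ : j ≠ i₀) (h₁ : j ≠ i₁) (μ : ℂ) :
    Commute (1 + slotPermMatrix (Fin n) ℂ (swap (Sum.inl i₀) (Sum.inl i₁)))
      (MauxJ n N η ξ K m j μ) := by
  rw [← Perm.sumCongr_swap_refl]
  exact (Commute.one_left _).add_left (commute_slotPermMatrix_of_submatrix_eq _
    (submatrix_embedAux_sumCongr j _ (swap_apply_of_ne_of_ne h₀ h₁)))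

theorem MauxJ_eq (j : Fin m) (μ : ℂ) :
    MauxJ n N η ξ K m j μ = embedAux j (Kaux n N K) *
      (List.ofFn fun i : Fin N => slotR η (Sum.inl j) (Sum.inr i.rev) (μ - ξ i.rev)).prod := by
  change embedAux j (monodromy n N η ξ K μ) = _
  rw [monodromy, embedAux_mul, embedAux_list_prod, List.map_ofFn]
  simp only [Function.comp_def, embedAux_Raux]

theorem MauxJ_mul_MauxJ {i₀ i₁ : Fin m} (h : i₀ ≠ i₁) (μ μ' : ℂ) :
    MauxJ n N η ξ K m i₀ μ * MauxJ n N η ξ K m i₁ μ' =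
      embedAux i₀ (Kaux n N K) * embedAux i₁ (Kaux n N K) *
        (List.ofFn fun i : Fin N => slotR η (Sum.inl i₀) (Sum.inr i.rev) (μ - ξ i.rev) *
          slotR η (Sum.inl i₁) (Sum.inr i.rev) (μ' - ξ i.rev)).prod := by
  have hK : Commute (embedAux i₁ (Kaux n N K))
      (List.ofFn fun i : Fin N => slotR η (Sum.inl i₀) (Sum.inr i.rev) (μ - ξ i.rev)).prod :=
    Commute.list_prod_right _ _ fun x hx => by
      obtain ⟨i, rfl⟩ := List.mem_ofFn.1 hx
      exact commute_embedAux_Kaux_slotR η K h.symm _ _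
  rw [MauxJ_eq, MauxJ_eq, ← prod_ofFn_mul_prod_ofFn, mul_assoc, ← mul_assoc _ (embedAux i₁ _),
    ← hK.eq]
  · simp only [mul_assoc]
  · intro i i' hii'
    refine commute_slotR_slotR ?_ η _ _
    simp [h, Fin.rev_inj, hii'.ne']

theorem exists_MauxJ_mul_MauxJ_eq_mul_symmetrizer {i₀ i₁ : Fin m} (h : i₀ ≠ i₁) (a : Fin N) :
    ∃ V, MauxJ n N η ξ K m i₀ (ξ a + η) * MauxJ n N η ξ K m i₁ (ξ a) =
      V * (1 + slotPermMatrix (Fin n) ℂ (swap (Sum.inl i₀) (Sum.inl i₁))) := by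
  have h₀₁ : (Sum.inl i₀ : Fin m ⊕ Fin N) ≠ Sum.inl i₁ := by simpa using h
  rw [MauxJ_mul_MauxJ η ξ K h]
  set T := 1 + slotPermMatrix (Fin n) ℂ (swap (Sum.inl i₀) (Sum.inl i₁) : Perm (Fin m ⊕ Fin N))
  set f := fun i : Fin N => slotR (α := Fin n) η (Sum.inl i₀) (Sum.inr i.rev) (ξ a + η - ξ i.rev) *
    slotR η (Sum.inl i₁) (Sum.inr i.rev) (ξ a - ξ i.rev) with hf
  -- At the site `a` the two R-matrices are `R(η) R(0)`, which factor through `T`.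
  have hfa :
      f a.rev = (η * η) • (slotPermMatrix (Fin n) ℂ (swap (Sum.inl i₁) (Sum.inr a)) * T) := by
    simp only [hf, Fin.rev_rev, add_sub_cancel_left, sub_self]
    exact slotR_mul_slotR_zero h₀₁ (by simp) (by simp) η
  obtain ⟨W, hW⟩ := exists_semiconjBy_list_prod T ((List.ofFn f).drop (a.rev + 1)) fun x hx => by
    obtain ⟨i, -, rfl⟩ := exists_le_of_mem_drop_ofFn hx
    have := semiconjBy_slotR_mul_slotR (α := Fin n) (z := Sum.inr i.rev) h₀₁ (by simp) (by simp)
      η (ξ a + η - ξ i.rev)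
    rw [show ξ a + η - ξ i.rev - η = ξ a - ξ i.rev by ring] at this
    exact ⟨_, this⟩
  refine ⟨embedAux i₀ (Kaux n N K) * embedAux i₁ (Kaux n N K) * ((List.ofFn f).take a.rev).prod *
    (η * η) • slotPermMatrix (Fin n) ℂ (swap (Sum.inl i₁) (Sum.inr a)) * W, ?_⟩
  rw [prod_ofFn_eq_take_mul_mul_drop f a.rev, hfa]
  simp only [mul_assoc, smul_mul_assoc, mul_smul_comm, hW.eq]

theorem exists_prod_MauxJ_eq_mul_symmetrizer (a : Fin N) (i : ℕ) (hi : i + 1 < m) (lam : ℂ)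
    (hlam : lam = ξ a + ((i + 1 : ℕ) : ℂ) * η) :
    ∃ V, (List.ofFn fun j : Fin m => MauxJ n N η ξ K m j (lam - (j : ℕ) * η)).prod =
      V * (1 + slotPermMatrix (Fin n) ℂ (swap (Sum.inl ⟨i, by omega⟩) (Sum.inl ⟨i + 1, hi⟩))) := by
  set T := 1 + slotPermMatrix (Fin n) ℂ
    (swap (Sum.inl ⟨i, by omega⟩) (Sum.inl ⟨i + 1, hi⟩) : Perm (Fin m ⊕ Fin N))
  set L := List.ofFn fun j : Fin m => MauxJ n N η ξ K m j (lam - (j : ℕ) * η) with hL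
  obtain ⟨V, hV⟩ := exists_MauxJ_mul_MauxJ_eq_mul_symmetrizer η ξ K
    (i₀ := ⟨i, by omega⟩) (i₁ := ⟨i + 1, hi⟩) (by simp) a
  have hpair : L.prod = (L.take i).prod * (V * T) * (L.drop (i + 2)).prod := by
    have h₀ : lam - (i : ℂ) * η = ξ a + η := by rw [hlam]; push_cast; ring
    have h₁ : lam - ((i + 1 : ℕ) : ℂ) * η = ξ a := by rw [hlam]; ring
    rw [hL, prod_ofFn_eq_take_mul_mul_mul_drop _ i hi]
    simp only [h₀, h₁, hV]
    rfl
  have hpost : Commute T (L.drop (i + 2)).prod :=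
    Commute.list_prod_right _ _ fun x hx => by
      obtain ⟨j, hj, rfl⟩ := exists_le_of_mem_drop_ofFn hx
      exact commute_symmetrizer_MauxJ η ξ K (Fin.ne_of_val_ne (by simp; omega))
        (Fin.ne_of_val_ne (by simp; omega)) _
  exact ⟨(L.take i).prod * V * (L.drop (i + 2)).prod, by
    rw [hpair, mul_assoc, mul_assoc V, hpost.eq]
    simp only [mul_assoc]⟩

end Monodromy

theorem transfer_central_zeroes_general (n N : ℕ) (η : ℂ)
    (ξ : Fin N → ℂ) (K : Matrix (Fin n) (Fin n) ℂ) :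
    ∀ m : ℕ, 1 ≤ m → m ≤ n → ∀ a : Fin N, ∀ r : ℕ, 1 ≤ r → r ≤ m - 1 →
      transfer n N η ξ K m (ξ a + (r : ℂ) * η) = 0 := by
  intro m _ _ a r hr hrm
  obtain ⟨V, hV⟩ := exists_prod_MauxJ_eq_mul_symmetrizer (m := m) η ξ K a (r - 1) (by omega) _
    (by rw [Nat.sub_add_cancel hr])
  rw [transfer_eq_auxTrace, hV, ← mul_assoc, one_add_slotPermMatrix_swap_inl_eq_kronecker,
    auxTrace_mul_kronecker_one_comm, ← mul_assoc, antisymH_eq_kronecker, ← Matrix.mul_kronecker_mul,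
    one_add_permTensorOp_swap_mul_antisym, Matrix.zero_kronecker, zero_mul]
  · ext
    simp [auxTrace]
  · simp

/-- the fused transfer matrices have central zeroes at `ξ_a + rη`,
`1 ≤ r ≤ m-1`. -/
theorem transfer_central_zeroes (n N : ℕ) (hn : 2 ≤ n) (hN : 1 ≤ N) (η : ℂ)
    (ξ : Fin N → ℂ) (K : Matrix (Fin n) (Fin n) ℂ) :
    ∀ m : ℕ, 1 ≤ m → m ≤ n → ∀ a : Fin N, ∀ r : ℕ, 1 ≤ r → r ≤ m - 1 →
      transfer n N η ξ K m (ξ a + (r : ℂ) * η) = 0 :=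
  transfer_central_zeroes_general n N η ξ K

end GLnSoV
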